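/- Spectral-based predictability bound: for a reversible Markov chain with stationary distribution π > 0, eigenvalues λ_j and L²(π)-orthonormal eigenfunctions f_j, and posterior PMFs r_y, the total variation distance between forecast Σ_y P^L(x,y) r_y and marginal Σ_y π(y) r_y satisfies D(L) ≤ (1/√2) · (Σ_{j=2}^K λ_j^{2L} f_j(x)²)^{1/2} · (R − 1)^{1/2}, where R = Σ_z (Σ_y π(y) r_y(z)²)/(Σ_y π(y) r_y(z)). -/

import Mathlib

lemma tsum_cs' {𝒵 : Type*} [Countable 𝒵] (h m : 𝒵 → ℝ)
    (hh : ∀ z, 0 ≤ h z) (hm : ∀ z, 0 ≤ m z) (hhs : Summable h) (hms : Summable m) :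
    ∑' z, Real.sqrt (h z * m z) ≤ Real.sqrt (∑' z, h z) * Real.sqrt (∑' z, m z) := by
  have key : ∀ s : Finset 𝒵, ∑ z ∈ s, Real.sqrt (h z * m z) ≤
      Real.sqrt (∑' z, h z) * Real.sqrt (∑' z, m z) := by
    intro s
    have h1 : (∑ z ∈ s, Real.sqrt (h z) * Real.sqrt (m z)) ^ 2 ≤
        (∑ z ∈ s, Real.sqrt (h z) ^ 2) * (∑ z ∈ s, Real.sqrt (m z) ^ 2) :=
      Finset.sum_mul_sq_le_sq_mul_sq s _ _
    have h2 : ∑ z ∈ s, Real.sqrt (h z) ^ 2 = ∑ z ∈ s, h z :=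
      Finset.sum_congr rfl fun z _ => Real.sq_sqrt (hh z)
    have h3 : ∑ z ∈ s, Real.sqrt (m z) ^ 2 = ∑ z ∈ s, m z :=
      Finset.sum_congr rfl fun z _ => Real.sq_sqrt (hm z)
    have h4 : ∑ z ∈ s, h z ≤ ∑' z, h z := Summable.sum_le_tsum s (fun z _ => hh z) hhs
    have h5 : ∑ z ∈ s, m z ≤ ∑' z, m z := Summable.sum_le_tsum s (fun z _ => hm z) hms
    have h6 : ∑ z ∈ s, Real.sqrt (h z * m z) = ∑ z ∈ s, Real.sqrt (h z) * Real.sqrt (m z) :=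
      Finset.sum_congr rfl fun z _ => Real.sqrt_mul (hh z) _
    have hs0 : (0:ℝ) ≤ ∑ z ∈ s, Real.sqrt (h z) * Real.sqrt (m z) :=
      Finset.sum_nonneg fun z _ => mul_nonneg (Real.sqrt_nonneg _) (Real.sqrt_nonneg _)
    rw [h6, ← Real.sqrt_mul (tsum_nonneg hh), ← Real.sqrt_sq hs0]
    apply Real.sqrt_le_sqrt
    calc (∑ z ∈ s, Real.sqrt (h z) * Real.sqrt (m z)) ^ 2
        ≤ (∑ z ∈ s, h z) * (∑ z ∈ s, m z) := by rw [← h2, ← h3]; exact h1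
      _ ≤ (∑' z, h z) * (∑' z, m z) := by
          apply mul_le_mul h4 h5 (Finset.sum_nonneg fun z _ => hm z) (tsum_nonneg hh)
  exact Summable.tsum_le_of_sum_le (summable_of_sum_le (fun z => Real.sqrt_nonneg _) key) key


/-- Spectral-based predictability bound: for a reversible,
irreducible Markov chain with stationary distribution `π > 0`, eigenvalues
`lam j` and `L²(π)`-orthonormal eigenfunctions `f j` (indexed by `J`, `|J| = K`,
with `f j₀ ≡ 1`, `lam j₀ = 1`), and posterior pmfs `r_y`, the total variation
distance `D(L)` between the forecast `z ↦ Σ_y (P^L)(x,y) r_y(z)` and the marginal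
`z ↦ Σ_y π(y) r_y(z)` satisfies
`D(L) ≤ (1/√2) · (Σ_{j≠j₀} λ_j^{2L} f_j(x)²)^{1/2} · (R − 1)^{1/2}`,
where `R = Σ_z (Σ_y π(y) r_y(z)²)/(Σ_y π(y) r_y(z))`. -/
theorem spectral_predictability_bound {𝒳 : Type*} [Fintype 𝒳] [DecidableEq 𝒳]
    {J : Type*} [Fintype J] [DecidableEq J] (hcard : Fintype.card J = Fintype.card 𝒳)
    {𝒵 : Type*} [Countable 𝒵]
    (P : Matrix 𝒳 𝒳 ℝ) (hP0 : ∀ x y, 0 ≤ P x y) (hP1 : ∀ x, ∑ y, P x y = 1)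
    (π : 𝒳 → ℝ) (hπ0 : ∀ x, 0 < π x) (hπ1 : ∑ x, π x = 1)
    (hrev : ∀ x y, π x * P x y = π y * P y x)
    (hirr : ∀ x y, ∃ L, 0 < (P ^ L) x y)
    (lam : J → ℝ) (f : J → 𝒳 → ℝ) (j₀ : J)
    (hf₀ : ∀ x, f j₀ x = 1) (hlam₀ : lam j₀ = 1)
    (horth : ∀ i j, (∑ x, f i x * f j x * π x) = if i = j then 1 else 0)
    (heig : ∀ j x, (∑ y, P x y * f j y) = lam j * f j x)
    (r : 𝒳 → 𝒵 → ℝ) (hr0 : ∀ y z, 0 ≤ r y z) (hr1 : ∀ y, ∑' z, r y z = 1)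
    (x : 𝒳) (L : ℕ) :
    (1 / 2) * ∑' z, |(∑ y, (P ^ L) x y * r y z) - ∑ y, π y * r y z| ≤
      (1 / Real.sqrt 2) *
        Real.sqrt (∑ j ∈ Finset.univ.erase j₀, lam j ^ (2 * L) * (f j x) ^ 2) *
        Real.sqrt ((∑' z, (∑ y, π y * (r y z) ^ 2) / (∑ y, π y * r y z)) - 1) := by
  classical
  set q : 𝒵 → ℝ := fun z => ∑ y, (P ^ L) x y * r y z with hqdef
  set m : 𝒵 → ℝ := fun z => ∑ y, π y * r y z with hmdef
  set n : 𝒵 → ℝ := fun z => ∑ y, π y * (r y z) ^ 2 with hndef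
  set S : ℝ := ∑ j ∈ Finset.univ.erase j₀, lam j ^ (2 * L) * (f j x) ^ 2 with hSdef
  show (1 / 2) * ∑' z, |q z - m z| ≤
      (1 / Real.sqrt 2) * Real.sqrt S * Real.sqrt ((∑' z, n z / m z) - 1)
  -- basic facts about r
  have hrs : ∀ y, Summable (r y) := by
    intro y
    by_contra hs
    have h := hr1 y
    rw [tsum_eq_zero_of_not_summable hs] at h
    norm_num at h
  have hrle1 : ∀ y z, r y z ≤ 1 := by
    intro y z
    have h := Summable.le_tsum (hrs y) z (fun z' _ => hr0 y z')
    rw [hr1 y] at h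
    exact h
  -- dual orthogonality
  have e : J ≃ 𝒳 := Fintype.equivOfCardEq hcard
  set M : Matrix J J ℝ := fun i j => f i (e j) * Real.sqrt (π (e j)) with hMdef
  have hMMT : M * M.transpose = 1 := by
    ext i i'
    simp only [Matrix.mul_apply, Matrix.transpose_apply, Matrix.one_apply, hMdef]
    have h := horth i i'
    rw [← Equiv.sum_comp e (fun xx => f i xx * f i' xx * π xx)] at h
    rw [← h]
    refine Finset.sum_congr rfl fun j _ => ?_
    show f i (e j) * Real.sqrt (π (e j)) * (f i' (e j) * Real.sqrt (π (e j))) = _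
    rw [mul_mul_mul_comm, Real.mul_self_sqrt (hπ0 _).le]
  have hMTM : M.transpose * M = 1 := mul_eq_one_comm.mp hMMT
  have hdual : ∀ y y', (∑ j, f j y * f j y') = if y = y' then (π y)⁻¹ else 0 := by
    intro y y'
    have h1 := congrFun (congrFun hMTM (e.symm y)) (e.symm y')
    simp only [Matrix.mul_apply, Matrix.transpose_apply, Matrix.one_apply, hMdef,
      Equiv.apply_symm_apply, EmbeddingLike.apply_eq_iff_eq] at h1
    have h2 : (∑ j, f j y * f j y') * (Real.sqrt (π y) * Real.sqrt (π y')) =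
        if y = y' then 1 else 0 := by
      rw [← h1, Finset.sum_mul]
      exact Finset.sum_congr rfl fun j _ => by
        show _ = f j (e (e.symm y)) * Real.sqrt (π (e (e.symm y))) * (f j (e (e.symm y')) * Real.sqrt (π (e (e.symm y'))))
        simp only [Equiv.apply_symm_apply]; ring
    by_cases hyy : y = y'
    · subst hyy
      rw [if_pos rfl] at h2 ⊢
      rw [Real.mul_self_sqrt (hπ0 y).le] at h2
      rw [mul_comm] at h2
      exact eq_inv_of_mul_eq_one_right h2
    · rw [if_neg hyy] at h2 ⊢
      have hne : Real.sqrt (π y) * Real.sqrt (π y') ≠ 0 :=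
        (mul_pos (Real.sqrt_pos.mpr (hπ0 y)) (Real.sqrt_pos.mpr (hπ0 y'))).ne'
      exact (mul_eq_zero.mp h2).resolve_right hne
  -- spectral decomposition of P^l
  have hspec : ∀ (l : ℕ) (u v : 𝒳), (P ^ l) u v = ∑ j, lam j ^ l * f j u * (f j v * π v) := by
    intro l
    induction l with
    | zero =>
      intro u v
      simp only [pow_zero, Matrix.one_apply, one_mul]
      have h1 : (∑ j, f j u * (f j v * π v)) = (∑ j, f j u * f j v) * π v := by
        rw [Finset.sum_mul]
        exact Finset.sum_congr rfl fun j _ => by ring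
      rw [h1, hdual u v]
      by_cases huv : u = v
      · subst huv
        rw [if_pos rfl, if_pos rfl, inv_mul_cancel₀ (hπ0 u).ne']
      · rw [if_neg huv, if_neg huv, zero_mul]
    | succ l ih =>
      intro u v
      rw [pow_succ', Matrix.mul_apply]
      simp_rw [ih, Finset.mul_sum]
      rw [Finset.sum_comm]
      refine Finset.sum_congr rfl fun j _ => ?_
      have h1 : ∑ w, P u w * (lam j ^ l * f j w * (f j v * π v)) =
          (lam j ^ l * (f j v * π v)) * ∑ w, P u w * f j w := by
        rw [Finset.mul_sum]
        exact Finset.sum_congr rfl fun w _ => by ring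
      rw [h1, heig j u, pow_succ]
      ring
  -- decomposition of q - m
  have hq_m : ∀ z, q z - m z = ∑ j ∈ Finset.univ.erase j₀,
      (lam j ^ L * f j x) * (∑ y, π y * f j y * r y z) := by
    intro z
    have h1 : q z = ∑ j, (lam j ^ L * f j x) * (∑ y, π y * f j y * r y z) := by
      show (∑ y, (P ^ L) x y * r y z) = _
      simp_rw [hspec L x, Finset.sum_mul]
      rw [Finset.sum_comm]
      refine Finset.sum_congr rfl fun j _ => ?_
      rw [Finset.mul_sum]
      exact Finset.sum_congr rfl fun y _ => by ring
    have h2 : (lam j₀ ^ L * f j₀ x) * (∑ y, π y * f j₀ y * r y z) = m z := by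
      simp [hlam₀, hf₀, hmdef]
    rw [h1, ← Finset.sum_erase_add _ _ (Finset.mem_univ j₀), h2]
    ring
  -- Parseval
  have hsumc : ∀ z, (∑ j, (∑ y, π y * f j y * r y z) ^ 2) = n z := by
    intro z
    calc (∑ j, (∑ y, π y * f j y * r y z) ^ 2)
        = ∑ y, ∑ y', (π y * r y z) * (π y' * r y' z) * ∑ j, f j y * f j y' := by
          simp_rw [sq, Finset.sum_mul_sum]
          rw [Finset.sum_comm]
          refine Finset.sum_congr rfl fun y _ => ?_
          rw [Finset.sum_comm]
          refine Finset.sum_congr rfl fun y' _ => ?_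
          rw [Finset.mul_sum]
          exact Finset.sum_congr rfl fun j _ => by ring
      _ = ∑ y, (π y * r y z) * (π y * r y z) * (π y)⁻¹ := by
          refine Finset.sum_congr rfl fun y _ => ?_
          simp_rw [hdual, mul_ite, mul_zero]
          rw [Finset.sum_ite_eq]
          simp
      _ = n z := by
          refine Finset.sum_congr rfl fun y _ => ?_
          have hπne : π y ≠ 0 := (hπ0 y).ne'
          field_simp
  have hw : ∀ z, (∑ j ∈ Finset.univ.erase j₀, (∑ y, π y * f j y * r y z) ^ 2) =
      n z - m z ^ 2 := by
    intro z
    have h1 := hsumc z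
    rw [← Finset.sum_erase_add _ _ (Finset.mem_univ j₀)] at h1
    have h2 : (∑ y, π y * f j₀ y * r y z) = m z := by simp [hf₀, hmdef]
    rw [h2] at h1
    linarith
  -- nonnegativity facts
  have hm0 : ∀ z, 0 ≤ m z := fun z =>
    Finset.sum_nonneg fun y _ => mul_nonneg (hπ0 y).le (hr0 y z)
  have hn0 : ∀ z, 0 ≤ n z := fun z =>
    Finset.sum_nonneg fun y _ => mul_nonneg (hπ0 y).le (sq_nonneg _)
  have hterm_le : ∀ y z, π y * r y z ≤ m z := fun y z =>
    Finset.single_le_sum (fun y' _ => mul_nonneg (hπ0 y').le (hr0 y' z)) (Finset.mem_univ y)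
  have hS0 : 0 ≤ S := by
    refine Finset.sum_nonneg fun j _ => mul_nonneg ?_ (sq_nonneg _)
    rw [mul_comm, pow_mul]
    positivity
  have hr_zero : ∀ z, m z = 0 → ∀ y, r y z = 0 := by
    intro z hz y
    have h1 : π y * r y z ≤ 0 := hz ▸ hterm_le y z
    have h2 : 0 ≤ π y * r y z := mul_nonneg (hπ0 y).le (hr0 y z)
    have h3 : π y * r y z = 0 := le_antisymm h1 h2
    rcases mul_eq_zero.mp h3 with h | h
    · exact absurd h (hπ0 y).ne'
    · exact h
  -- CS for m^2 ≤ n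
  have hnm : ∀ z, m z ^ 2 ≤ n z := by
    intro z
    have h1 : (∑ y, Real.sqrt (π y) * (Real.sqrt (π y) * r y z)) ^ 2 ≤
        (∑ y, Real.sqrt (π y) ^ 2) * (∑ y, (Real.sqrt (π y) * r y z) ^ 2) :=
      Finset.sum_mul_sq_le_sq_mul_sq _ _ _
    have h2 : (∑ y, Real.sqrt (π y) * (Real.sqrt (π y) * r y z)) = m z := by
      refine Finset.sum_congr rfl fun y _ => ?_
      rw [← mul_assoc, Real.mul_self_sqrt (hπ0 y).le]
    have h3 : (∑ y, Real.sqrt (π y) ^ 2) = 1 := by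
      rw [← hπ1]
      exact Finset.sum_congr rfl fun y _ => Real.sq_sqrt (hπ0 y).le
    have h4 : (∑ y, (Real.sqrt (π y) * r y z) ^ 2) = n z := by
      refine Finset.sum_congr rfl fun y _ => ?_
      rw [mul_pow, Real.sq_sqrt (hπ0 y).le]
    rw [h2, h3, h4, one_mul] at h1
    exact h1
  have hcore0 : ∀ z, 0 ≤ n z / m z - m z := by
    intro z
    rcases eq_or_lt_of_le (hm0 z) with hz | hz
    · rw [← hz, div_zero, sub_zero]
    · rw [sub_nonneg, le_div_iff₀ hz, ← sq]
      exact hnm z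
  -- pointwise bound
  have hpoint : ∀ z, |q z - m z| ≤ Real.sqrt S * Real.sqrt ((n z / m z - m z) * m z) := by
    intro z
    rw [← Real.sqrt_mul hS0, ← Real.sqrt_sq_eq_abs]
    apply Real.sqrt_le_sqrt
    rcases eq_or_lt_of_le (hm0 z) with hz | hz
    · have hq0 : q z = 0 := by
        show (∑ y, (P ^ L) x y * r y z) = 0
        refine Finset.sum_eq_zero fun y _ => ?_
        rw [hr_zero z hz.symm y, mul_zero]
      rw [hq0, ← hz]
      simp
    · have h1 := hq_m z
      have h2 : (q z - m z) ^ 2 ≤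
          (∑ j ∈ Finset.univ.erase j₀, (lam j ^ L * f j x) ^ 2) *
          (∑ j ∈ Finset.univ.erase j₀, (∑ y, π y * f j y * r y z) ^ 2) := by
        rw [h1]
        exact Finset.sum_mul_sq_le_sq_mul_sq _ _ _
      have h3 : (∑ j ∈ Finset.univ.erase j₀, (lam j ^ L * f j x) ^ 2) = S := by
        refine Finset.sum_congr rfl fun j _ => ?_
        rw [mul_pow, ← pow_mul, mul_comm L 2]
      have h4 : (n z / m z - m z) * m z = n z - m z ^ 2 := by
        field_simp
      rw [h3, hw z] at h2
      rw [h4]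
      exact h2
  -- summability
  have hms : Summable m := by
    apply summable_sum
    intro y _
    exact (hrs y).mul_left (π y)
  have hm_tsum : (∑' z, m z) = 1 := by
    show (∑' z, ∑ y, π y * r y z) = 1
    rw [Summable.tsum_finsetSum (fun y _ => (hrs y).mul_left (π y))]
    have : ∀ y ∈ Finset.univ, (∑' z, π y * r y z) = π y := by
      intro y _
      rw [tsum_mul_left, hr1 y, mul_one]
    rw [Finset.sum_congr rfl this, hπ1]
  have hrsq : ∀ y, Summable (fun z => (r y z) ^ 2) := by
    intro y
    apply Summable.of_nonneg_of_le (fun z => sq_nonneg _) (fun z => ?_) (hrs y)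
    nlinarith [hr0 y z, hrle1 y z]
  have hns : Summable n := by
    apply summable_sum
    intro y _
    exact (hrsq y).mul_left (π y)
  have hdiv_le : ∀ z, n z / m z ≤ ∑ y, r y z := by
    intro z
    rcases eq_or_lt_of_le (hm0 z) with hz | hz
    · rw [← hz, div_zero]
      exact Finset.sum_nonneg fun y _ => hr0 y z
    · rw [div_le_iff₀ hz]
      calc n z = ∑ y, π y * (r y z) ^ 2 := rfl
        _ ≤ ∑ y, r y z * m z := by
            refine Finset.sum_le_sum fun y _ => ?_
            calc π y * (r y z) ^ 2 = (π y * r y z) * r y z := by ring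
              _ ≤ m z * r y z := mul_le_mul_of_nonneg_right (hterm_le y z) (hr0 y z)
              _ = r y z * m z := mul_comm _ _
        _ = (∑ y, r y z) * m z := (Finset.sum_mul _ _ _).symm
  have hdivs : Summable (fun z => n z / m z) :=
    Summable.of_nonneg_of_le (fun z => div_nonneg (hn0 z) (hm0 z)) hdiv_le
      (summable_sum fun y _ => hrs y)
  have hcs : Summable (fun z => n z / m z - m z) := hdivs.sub hms
  have hcore_tsum : (∑' z, (n z / m z - m z)) = (∑' z, n z / m z) - 1 := by
    rw [Summable.tsum_sub hdivs hms, hm_tsum]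
  -- summability of sqrt((n/m - m) * m)
  have hsqrt_le : ∀ z, Real.sqrt ((n z / m z - m z) * m z) ≤ ((n z / m z - m z) + m z) / 2 := by
    intro z
    rw [Real.sqrt_mul (hcore0 z)]
    nlinarith [Real.sq_sqrt (hcore0 z), Real.sq_sqrt (hm0 z),
      sq_nonneg (Real.sqrt (n z / m z - m z) - Real.sqrt (m z)),
      Real.sqrt_nonneg (n z / m z - m z), Real.sqrt_nonneg (m z)]
  have hsqrts : Summable (fun z => Real.sqrt ((n z / m z - m z) * m z)) :=
    Summable.of_nonneg_of_le (fun z => Real.sqrt_nonneg _) hsqrt_le ((hcs.add hms).div_const 2)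
  -- combine via tsum Cauchy-Schwarz
  have habs : Summable (fun z => |q z - m z|) :=
    Summable.of_nonneg_of_le (fun z => abs_nonneg _) hpoint (hsqrts.mul_left _)
  have hmain : (∑' z, |q z - m z|) ≤ Real.sqrt S * Real.sqrt ((∑' z, n z / m z) - 1) := by
    calc (∑' z, |q z - m z|)
        ≤ ∑' z, Real.sqrt S * Real.sqrt ((n z / m z - m z) * m z) :=
          Summable.tsum_le_tsum hpoint habs (hsqrts.mul_left _)
      _ = Real.sqrt S * ∑' z, Real.sqrt ((n z / m z - m z) * m z) := tsum_mul_left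
      _ ≤ Real.sqrt S * (Real.sqrt (∑' z, (n z / m z - m z)) * Real.sqrt (∑' z, m z)) := by
          apply mul_le_mul_of_nonneg_left _ (Real.sqrt_nonneg S)
          exact tsum_cs' _ _ hcore0 hm0 hcs hms
      _ = Real.sqrt S * Real.sqrt ((∑' z, n z / m z) - 1) := by
          rw [hm_tsum, Real.sqrt_one, mul_one, hcore_tsum]
  -- conclusion
  have hT0 : 0 ≤ ∑' z, |q z - m z| := tsum_nonneg fun z => abs_nonneg _
  have hB0 : 0 ≤ Real.sqrt S * Real.sqrt ((∑' z, n z / m z) - 1) :=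
    mul_nonneg (Real.sqrt_nonneg _) (Real.sqrt_nonneg _)
  have hhalf : (1:ℝ) / 2 ≤ 1 / Real.sqrt 2 := by
    have h2 : Real.sqrt 2 ≤ 2 := by
      nlinarith [Real.sq_sqrt (by norm_num : (0:ℝ) ≤ 2), Real.sqrt_nonneg 2]
    have hpos : 0 < Real.sqrt 2 := Real.sqrt_pos.mpr (by norm_num)
    exact one_div_le_one_div_of_le hpos h2
  calc (1 / 2) * ∑' z, |q z - m z|
      ≤ (1 / 2) * (Real.sqrt S * Real.sqrt ((∑' z, n z / m z) - 1)) := by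
        apply mul_le_mul_of_nonneg_left hmain (by norm_num)
    _ ≤ (1 / Real.sqrt 2) * (Real.sqrt S * Real.sqrt ((∑' z, n z / m z) - 1)) :=
        mul_le_mul_of_nonneg_right hhalf hB0
    _ = (1 / Real.sqrt 2) * Real.sqrt S * Real.sqrt ((∑' z, n z / m z) - 1) := by ring
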